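/- arXiv:1804.00794 — 2 statements merged into one kernel-verified Lean document; each statement's English description precedes it below -/
import Mathlib

section
/- Survival of disjoint unions. Let G be a simple directed graph on [n] with CTLN parameters in the legal range, and let σ ⊆ [n] be partitioned into nonempty sets σ_1,…,σ_N such that G|_σ is the disjoint union of the induced subgraphs G|_{σ_1},…,G|_{σ_N} (no edges of G between distinct σ_i inside σ). If σ_i ∉ FP(G) for some i ∈ [N], then σ ∉ FP(G). -/
open Matrix Finset

/-- `x` is a fixed point of the TLN `(W, b)` restricted to the subset `τ` of neurons
(coordinates outside `τ` are held at zero): for `i ∈ τ`,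
`x i = [∑_{j ∈ τ} W i j * x j + b i]_+`. -/
def IsRestFixedPoint {n : ℕ} (W : Matrix (Fin n) (Fin n) ℝ) (b : Fin n → ℝ)
    (τ : Finset (Fin n)) (x : Fin n → ℝ) : Prop :=
  (∀ i ∈ τ, x i = max 0 (∑ j ∈ τ, W i j * x j + b i)) ∧ ∀ i ∉ τ, x i = 0

/-- `σ ∈ FP(W_τ, b_τ)` : `σ` is the support of a fixed point of the restriction
of the TLN `(W, b)` to `τ`. -/
def memFP {n : ℕ} (W : Matrix (Fin n) (Fin n) ℝ) (b : Fin n → ℝ)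
    (τ σ : Finset (Fin n)) : Prop :=
  ∃ x : Fin n → ℝ, IsRestFixedPoint W b τ x ∧ ∀ i, 0 < x i ↔ i ∈ σ

/-- `det (I - W_σ)`, the determinant of the principal submatrix on `σ`. -/
noncomputable def detIW {n : ℕ} (W : Matrix (Fin n) (Fin n) ℝ) (σ : Finset (Fin n)) : ℝ :=
  ((1 : Matrix {x // x ∈ σ} {x // x ∈ σ} ℝ) - W.submatrix Subtype.val Subtype.val).det

/-- The Cramer determinant `s_i^σ := det ((I − W_{σ∪{i}})_i ; b_{σ∪{i}})`:
the matrix `I − W` restricted to `σ ∪ {i}`, with the column indexed by `i`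
replaced by `b` restricted to `σ ∪ {i}`. -/
noncomputable def cramerDet {n : ℕ} (W : Matrix (Fin n) (Fin n) ℝ) (b : Fin n → ℝ)
    (σ : Finset (Fin n)) (i : Fin n) : ℝ :=
  (Matrix.updateCol
      ((1 : Matrix {x // x ∈ insert i σ} {x // x ∈ insert i σ} ℝ)
        - W.submatrix Subtype.val Subtype.val)
      ⟨i, Finset.mem_insert_self i σ⟩ (fun p => b p.val)).det

/-- The TLN `(W, b)` is competitive. -/
def Competitive {n : ℕ} (W : Matrix (Fin n) (Fin n) ℝ) (b : Fin n → ℝ) : Prop :=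
  (∀ i j, W i j ≤ 0) ∧ (∀ i, W i i = 0) ∧ (∀ i, 0 ≤ b i)

/-- The TLN `(W, b)` is nondegenerate. -/
def Nondegenerate {n : ℕ} (W : Matrix (Fin n) (Fin n) ℝ) (b : Fin n → ℝ) : Prop :=
  (∃ i, 0 < b i) ∧ (∀ σ : Finset (Fin n), detIW W σ ≠ 0) ∧
  (∀ σ : Finset (Fin n), (∀ i ∈ σ, 0 < b i) → ∀ i ∈ σ, cramerDet W b σ i ≠ 0)

/-- The CTLN connectivity matrix of the simple directed graph `G`
(here `G j i` means there is an edge `j → i` in `G`). -/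
def ctlnW {n : ℕ} (G : Fin n → Fin n → Prop) [DecidableRel G] (ε δ : ℝ) :
    Matrix (Fin n) (Fin n) ℝ :=
  Matrix.of fun i j => if i = j then 0 else if G j i then -1 + ε else -1 - δ

/-- `k` graphically dominates `j` with respect to `σ`, in the directed graph `G`
(where `G a b` means there is an edge `a → b`). -/
def GraphDominates {α : Type*} (G : α → α → Prop) (σ : Finset α) (k j : α) : Prop :=
  (j ∈ σ ∨ k ∈ σ) ∧
  (∀ i ∈ σ, i ≠ j → i ≠ k → G i j → G i k) ∧
  (j ∈ σ → G j k) ∧ (k ∈ σ → ¬ G k j)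

/-- `w_j^σ := ∑_{i ∈ σ} (−I + W)_{j i} · |s_i^σ|`. -/
noncomputable def wval {n : ℕ} (W : Matrix (Fin n) (Fin n) ℝ) (b : Fin n → ℝ)
    (σ : Finset (Fin n)) (j : Fin n) : ℝ :=
  ∑ i ∈ σ, (W j i - if j = i then 1 else 0) * |cramerDet W b σ i|

/-!
Let `x` be a fixed point with support `σ`, and let `τ = σ_i`. Every neuron of `τ` receives
the same inhibition `(1 + δ) S` from the rest of the support, where `S = ∑_{j ∈ σ \ τ} x_j`,
so on `τ` the vector `x` is a fixed point of the network restricted to `τ` with the smaller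
input `θ - (1 + δ) S`, which is positive because `x` does not vanish on `τ`. Neurons off `τ`
stay off: those in `σ \ τ` receive `-(1 + δ) ∑_{j ∈ τ} x_j`, and `θ ≤ (1 + δ) ∑_j x_j` at any
fixed point; those off `σ` lose at most `(1 + δ) S` of inhibition, which is exactly the drop
in input. Rescaling by `θ / (θ - (1 + δ) S)` gives a fixed point with support `τ` for the
original input.
-/

section ThresholdLinear

variable {n : ℕ} {W : Matrix (Fin n) (Fin n) ℝ} {b : Fin n → ℝ} {τ σ : Finset (Fin n)}
  {x : Fin n → ℝ}

theorem isRestFixedPoint_univ_iff :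
    IsRestFixedPoint W b univ x ↔ ∀ i, x i = max 0 (∑ j, W i j * x j + b i) := by
  simp [IsRestFixedPoint]

theorem IsRestFixedPoint.nonneg (hx : IsRestFixedPoint W b τ x) (i : Fin n) : 0 ≤ x i := by
  by_cases hi : i ∈ τ
  · rw [hx.1 i hi]
    exact le_max_left _ _
  · rw [hx.2 i hi]

theorem IsRestFixedPoint.smul (hx : IsRestFixedPoint W b τ x) {c : ℝ} (hc : 0 ≤ c) :
    IsRestFixedPoint W (c • b) τ (c • x) := by
  refine ⟨fun i hi => ?_, fun i hi => by simp [hx.2 i hi]⟩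
  have hrow : ∑ j ∈ τ, W i j * (c • x) j + (c • b) i = c * (∑ j ∈ τ, W i j * x j + b i) := by
    simp only [Pi.smul_apply, smul_eq_mul, mul_add, mul_sum]
    congr 1
    exact sum_congr rfl fun j _ => by ring
  rw [hrow, Pi.smul_apply, smul_eq_mul, hx.1 i hi, mul_max_of_nonneg _ _ hc, mul_zero]

theorem memFP.smul (h : memFP W b τ σ) {c : ℝ} (hc : 0 < c) : memFP W (c • b) τ σ := by
  obtain ⟨x, hx, hsupp⟩ := h
  exact ⟨c • x, hx.smul hc.le, fun i => by simp [mul_pos_iff_of_pos_left hc, hsupp]⟩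

theorem IsRestFixedPoint.eq_of_pos (hx : IsRestFixedPoint W b univ x) {u : Fin n}
    (hu : 0 < x u) : x u = ∑ j, W u j * x j + b u := by
  have hrow := isRestFixedPoint_univ_iff.mp hx u
  rw [hrow] at hu ⊢
  exact max_eq_right (lt_max_iff.mp hu |>.resolve_left (lt_irrefl 0)).le

variable {θ d : ℝ}

theorem IsRestFixedPoint.const_pos (hx : IsRestFixedPoint W (fun _ => θ) univ x)
    (hWle : ∀ u v, W u v ≤ 0) {u : Fin n} (hu : 0 < x u) : 0 < θ := by
  have hinh : ∑ j, W u j * x j ≤ 0 :=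
    sum_nonpos fun j _ => mul_nonpos_of_nonpos_of_nonneg (hWle u j) (hx.nonneg j)
  linarith [hx.eq_of_pos hu]

theorem IsRestFixedPoint.const_le_mul_sum (hx : IsRestFixedPoint W (fun _ => θ) univ x)
    (hdiag : ∀ u, W u u = 0) (hd : 1 ≤ d) (hWge : ∀ u v, -d ≤ W u v) {u : Fin n}
    (hu : 0 < x u) : θ ≤ d * ∑ j, x j := by
  have hxu := hx.eq_of_pos hu
  have hsplit := add_sum_erase univ (fun j => W u j * x j) (mem_univ u)
  have hxsplit := add_sum_erase univ x (mem_univ u)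
  have hbound : -d * ∑ j ∈ univ.erase u, x j ≤ ∑ j ∈ univ.erase u, W u j * x j := by
    rw [mul_sum]
    exact sum_le_sum fun j _ => mul_le_mul_of_nonneg_right (hWge u j) (hx.nonneg j)
  simp only [hdiag, zero_mul, zero_add] at hsplit
  nlinarith [hx.nonneg u]

end ThresholdLinear

section UniformCrossInhibition

variable {n : ℕ} {W : Matrix (Fin n) (Fin n) ℝ} {θ d : ℝ} {τ σ : Finset (Fin n)}
  {x : Fin n → ℝ}

theorem IsRestFixedPoint.restrict_of_uniform_cross
    (hx : IsRestFixedPoint W (fun _ => θ) univ x) (hsupp : ∀ i, 0 < x i ↔ i ∈ σ)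
    (hdiag : ∀ u, W u u = 0) (hd : 1 ≤ d) (hWge : ∀ u v, -d ≤ W u v)
    (hcross : ∀ u ∈ τ, ∀ v ∈ σ \ τ, W u v = -d ∧ W v u = -d) :
    IsRestFixedPoint W (fun _ => θ - d * ∑ j ∈ τᶜ, x j) univ
      (fun u => if u ∈ τ then x u else 0) := by
  have hfix := isRestFixedPoint_univ_iff.mp hx
  have hx0 : ∀ j ∉ σ, x j = 0 := fun j hj =>
    le_antisymm (not_lt.mp fun h => hj ((hsupp j).mp h)) (hx.nonneg j)
  have hsplit : ∀ u, ∑ j, W u j * x j = ∑ j ∈ τ, W u j * x j + ∑ j ∈ τᶜ, W u j * x j :=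
    fun u => (sum_add_sum_compl τ _).symm
  rw [isRestFixedPoint_univ_iff]
  intro u
  simp only [mul_ite, mul_zero, sum_ite_mem, univ_inter]
  by_cases huτ : u ∈ τ
  · have hinh : ∑ j ∈ τᶜ, W u j * x j = -d * ∑ j ∈ τᶜ, x j := by
      rw [mul_sum]
      refine sum_congr rfl fun j hj => ?_
      by_cases hjσ : j ∈ σ
      · rw [(hcross u huτ j (mem_sdiff.mpr ⟨hjσ, mem_compl.mp hj⟩)).1]
      · rw [hx0 j hjσ, mul_zero, mul_zero]
    rw [if_pos huτ, hfix u, hsplit u, hinh]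
    congr 1
    ring
  rw [if_neg huτ]
  refine (max_eq_left ?_).symm
  by_cases huσ : u ∈ σ
  · have hinh : ∑ j ∈ τ, W u j * x j = -d * ∑ j ∈ τ, x j := by
      rw [mul_sum]
      exact sum_congr rfl fun j hj => by
        rw [(hcross j hj u (mem_sdiff.mpr ⟨huσ, huτ⟩)).2]
    have hθ := hx.const_le_mul_sum hdiag hd hWge ((hsupp u).mpr huσ)
    rw [← sum_add_sum_compl τ x] at hθ
    linarith
  · have hoff : ∑ j, W u j * x j + θ ≤ 0 := by
      have h := hfix u
      rw [hx0 u huσ] at h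
      exact max_eq_left_iff.mp h.symm
    have hinh : -d * ∑ j ∈ τᶜ, x j ≤ ∑ j ∈ τᶜ, W u j * x j := by
      rw [mul_sum]
      exact sum_le_sum fun j _ => mul_le_mul_of_nonneg_right (hWge u j) (hx.nonneg j)
    linarith [hsplit u]

theorem memFP_of_uniform_cross (hθ : 0 < θ) (hdiag : ∀ u, W u u = 0) (hd : 1 ≤ d)
    (hWle : ∀ u v, W u v ≤ 0) (hWge : ∀ u v, -d ≤ W u v) (hτσ : τ ⊆ σ) (hτ : τ.Nonempty)
    (hcross : ∀ u ∈ τ, ∀ v ∈ σ \ τ, W u v = -d ∧ W v u = -d)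
    (hσ : memFP W (fun _ => θ) univ σ) : memFP W (fun _ => θ) univ τ := by
  obtain ⟨x, hx, hsupp⟩ := hσ
  obtain ⟨u, hu⟩ := hτ
  set θ' := θ - d * ∑ j ∈ τᶜ, x j
  have hy := hx.restrict_of_uniform_cross hsupp hdiag hd hWge hcross
  have hτfp : memFP W (fun _ => θ') univ τ := by
    refine ⟨_, hy, fun i => ?_⟩
    by_cases hi : i ∈ τ
    · simpa [hi] using (hsupp i).mpr (hτσ hi)
    · simp [hi]
  have hθ' : 0 < θ' := hy.const_pos hWle (u := u) (by simpa [hu] using (hsupp u).mpr (hτσ hu))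
  convert hτfp.smul (div_pos hθ hθ') using 1
  ext
  simp [hθ'.ne']

end UniformCrossInhibition

section CTLN

variable {n : ℕ} {G : Fin n → Fin n → Prop} [DecidableRel G] {ε δ : ℝ}

@[simp]
theorem ctlnW_self (u : Fin n) : ctlnW G ε δ u u = 0 := by
  simp [ctlnW]

theorem ctlnW_nonpos (hε : ε ≤ 1) (hδ : -1 ≤ δ) (u v : Fin n) : ctlnW G ε δ u v ≤ 0 := by
  simp only [ctlnW, of_apply]
  split_ifs <;> linarith

theorem neg_one_add_le_ctlnW (hε : -δ ≤ ε) (hδ : -1 ≤ δ) (u v : Fin n) :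
    -(1 + δ) ≤ ctlnW G ε δ u v := by
  simp only [ctlnW, of_apply]
  split_ifs <;> linarith

theorem ctlnW_of_not_adj {u v : Fin n} (huv : u ≠ v) (h : ¬ G v u) :
    ctlnW G ε δ u v = -(1 + δ) := by
  simp [ctlnW, huv, h]
  ring

end CTLN

theorem disjoint_union_survival_general {n N : ℕ} (G : Fin n → Fin n → Prop) [DecidableRel G]
    (ε δ θ : ℝ)
    (hθ : 0 < θ) (hδ : 0 < δ) (hε : 0 < ε) (hεδ : ε < δ / (δ + 1))
    (W : Matrix (Fin n) (Fin n) ℝ) (hWdef : W = ctlnW G ε δ)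
    (b : Fin n → ℝ) (hbdef : b = fun _ => θ)
    (σ : Finset (Fin n)) (P : Fin N → Finset (Fin n))
    (hne : ∀ i, (P i).Nonempty)
    (hcover : σ = Finset.univ.biUnion P)
    (hnoedges : ∀ i j : Fin N, i ≠ j → ∀ u ∈ P i, ∀ v ∈ P j, ¬ G u v)
    (hbad : ∃ i : Fin N, ¬ memFP W b Finset.univ (P i)) :
    ¬ memFP W b Finset.univ σ := by
  subst hWdef hbdef hcover
  obtain ⟨i, hi⟩ := hbad
  have hε1 : ε < 1 := hεδ.trans ((div_lt_one (by linarith)).mpr (by linarith))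
  refine fun hσ => hi (memFP_of_uniform_cross hθ ctlnW_self (by linarith)
    (ctlnW_nonpos hε1.le (by linarith)) (neg_one_add_le_ctlnW (by linarith) (by linarith))
    (subset_biUnion_of_mem P (mem_univ i)) (hne i) ?_ hσ)
  intro u hu v hv
  obtain ⟨hvσ, hvi⟩ := mem_sdiff.mp hv
  obtain ⟨k, -, hvk⟩ := mem_biUnion.mp hvσ
  have hki : k ≠ i := by rintro rfl; exact hvi hvk
  have huv : u ≠ v := by rintro rfl; exact hvi hu
  exact ⟨ctlnW_of_not_adj huv (hnoedges k i hki v hvk u hu),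
    ctlnW_of_not_adj huv.symm (hnoedges i k hki.symm u hu v hvk)⟩

/-- **Survival of disjoint unions.** Let `G` be a simple directed graph on `[n]` with CTLN
parameters in the legal range, and let `σ ⊆ [n]` be partitioned into nonempty sets
`σ_1, …, σ_N` such that `G|_σ` is the disjoint union of the `G|_{σ_i}` (no edges of `G`
between distinct `σ_i`). If `σ_i ∉ FP(G)` for some `i`, then `σ ∉ FP(G)`. -/
theorem disjoint_union_survival {n N : ℕ} (G : Fin n → Fin n → Prop) [DecidableRel G]
    (hGirr : ∀ i, ¬ G i i) (ε δ θ : ℝ)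
    (hθ : 0 < θ) (hδ : 0 < δ) (hε : 0 < ε) (hεδ : ε < δ / (δ + 1))
    (W : Matrix (Fin n) (Fin n) ℝ) (hWdef : W = ctlnW G ε δ)
    (b : Fin n → ℝ) (hbdef : b = fun _ => θ)
    (σ : Finset (Fin n)) (P : Fin N → Finset (Fin n))
    (hne : ∀ i, (P i).Nonempty)
    (hdisj : ∀ i j, i ≠ j → Disjoint (P i) (P j))
    (hcover : σ = Finset.univ.biUnion P)
    (hnoedges : ∀ i j : Fin N, i ≠ j → ∀ u ∈ P i, ∀ v ∈ P j, ¬ G u v)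
    (hbad : ∃ i : Fin N, ¬ memFP W b Finset.univ (P i)) :
    ¬ memFP W b Finset.univ σ :=
  disjoint_union_survival_general G ε δ θ hθ hδ hε hεδ W hWdef b hbdef σ P hne hcover hnoedges hbad
end

section
/- Independent sets rule. Let G be a simple directed graph on [n] with CTLN parameters in the legal range, and let σ ⊆ [n] be a nonempty independent set (there are no edges of G between distinct nodes of σ). Then σ ∈ FP(G) if and only if every i ∈ σ is a sink of G (i has no outgoing edges in G). Furthermore, when σ ∈ FP(G): every eigenvalue of −I + W_σ has negative real part (the fixed point is stable) if and only if |σ| = 1; and sgn det(I − W_σ) = (−1)^{|σ|−1}. -/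
open Matrix Finset

/-!
On an independent set `σ` every off-diagonal entry of `W_σ` is `-1 - δ`, so
`W_σ = (1 + δ) (I - J)` with `J` the all-ones matrix. Both the spectrum of `-I + W_σ` and
`det (I - W_σ)` then follow from `det (c I + d J) = c ^ (k - 1) (c + d k)`, `k = |σ|`: the
eigenvalues are `δ > 0` (when `k ≥ 2`) and `-(k + (k - 1) δ) < 0`.

For the fixed points, the on-neuron equation at `i ∈ σ` reads `δ x_i = (1 + δ) ∑_σ x - θ`.
If `i → k` with `k ∉ σ`, the net input to `k` is at least `ε x_i > 0`, so `k` cannot be off.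
Conversely, if every node of `σ` is a sink, the uniform vector solving the on-neuron
equations gives every outside node the input `-δ v < 0`.
-/

section UniformMatrix

variable {m K : Type*} [Fintype m] [DecidableEq m] [Nonempty m] [Field K]

theorem det_smul_one_add_smul_ones (c d : K) :
    (c • (1 : Matrix m m K) + d • of fun _ _ => 1).det
      = c ^ (Fintype.card m - 1) * (c + d * Fintype.card m) := by
  rcases eq_or_ne c 0 with rfl | hc
  · rcases subsingleton_or_nontrivial m with hm | ⟨i, j, hij⟩
    · obtain ⟨i⟩ := ‹Nonempty m›
      simp [det_eq_elem_of_subsingleton _ i, Fintype.card_eq_one_iff_nonempty_unique.mpr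
        ⟨uniqueOfSubsingleton i⟩]
    · have h2 : 1 < Fintype.card m := Fintype.one_lt_card_iff.mpr ⟨i, j, hij⟩
      rw [det_zero_of_row_eq hij (by ext; simp), zero_pow (by omega), zero_mul]
  · have hrank : c • (1 : Matrix m m K) + d • of (fun _ _ => 1) = c • (1 +
        replicateCol Unit (fun _ : m => c⁻¹ * d) * replicateRow Unit (fun _ : m => (1 : K))) := by
      ext i j
      rcases eq_or_ne i j with rfl | h
      · simp [mul_apply]
        field_simp
      · simp [mul_apply, h, hc]
    obtain ⟨k, hk⟩ := Nat.exists_eq_add_one_of_ne_zero (Fintype.card_ne_zero (α := m))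
    rw [hrank, det_smul, det_one_add_replicateCol_mul_replicateRow, hk]
    simp [dotProduct, hk, pow_succ]
    field_simp

end UniformMatrix

section CTLN

variable {n : ℕ} {G : Fin n → Fin n → Prop} [DecidableRel G] {ε δ : ℝ} {σ : Finset (Fin n)}

theorem ctlnW_apply_of_edge {i j : Fin n} (hij : i ≠ j) (h : G j i) :
    ctlnW G ε δ i j = -1 + ε := by
  simp [ctlnW, hij, h]

theorem ctlnW_apply_of_not_edge {i j : Fin n} (hij : i ≠ j) (h : ¬ G j i) :
    ctlnW G ε δ i j = -1 - δ := by
  simp [ctlnW, hij, h]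

theorem neg_one_sub_le_ctlnW (hε : 0 ≤ ε) (hδ : 0 ≤ δ) (i j : Fin n) :
    -1 - δ ≤ ctlnW G ε δ i j := by
  simp only [ctlnW, of_apply]
  split_ifs <;> linarith

theorem ctlnW_apply_of_indep (hindep : ∀ i ∈ σ, ∀ j ∈ σ, ¬ G i j) {i j : Fin n}
    (hi : i ∈ σ) (hj : j ∈ σ) : ctlnW G ε δ i j = if i = j then 0 else -1 - δ := by
  simp [ctlnW, hindep j hj i hi]

theorem ctlnW_submatrix_of_indep (hindep : ∀ i ∈ σ, ∀ j ∈ σ, ¬ G i j) :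
    (ctlnW G ε δ).submatrix (Subtype.val : σ → Fin n) Subtype.val
      = (1 + δ) • (1 : Matrix σ σ ℝ) - (1 + δ) • of fun _ _ => 1 := by
  ext ⟨i, hi⟩ ⟨j, hj⟩
  rw [submatrix_apply, ctlnW_apply_of_indep hindep hi hj]
  rcases eq_or_ne i j with rfl | h
  · simp
  · simp [one_apply, h]
    ring

theorem detIW_ctlnW_of_indep (hσ : σ.Nonempty) (hindep : ∀ i ∈ σ, ∀ j ∈ σ, ¬ G i j) :
    detIW (ctlnW G ε δ) σ = (-δ) ^ (σ.card - 1) * (-δ + (1 + δ) * σ.card) := by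
  have : Nonempty σ := hσ.to_subtype
  rw [detIW, ctlnW_submatrix_of_indep hindep, ← Fintype.card_coe σ,
    ← det_smul_one_add_smul_ones]
  congr 1
  module

theorem isRoot_charpoly_ctlnW_of_indep (hσ : σ.Nonempty)
    (hindep : ∀ i ∈ σ, ∀ j ∈ σ, ¬ G i j) (μ : ℂ) :
    ((-(1 : Matrix σ σ ℝ) + (ctlnW G ε δ).submatrix Subtype.val Subtype.val).map
        Complex.ofReal).charpoly.IsRoot μ
      ↔ (μ - δ) ^ (σ.card - 1) * (μ - δ + (1 + δ) * σ.card) = 0 := by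
  have : Nonempty σ := hσ.to_subtype
  rw [Polynomial.IsRoot, eval_charpoly, ctlnW_submatrix_of_indep hindep, ← Fintype.card_coe σ,
    ← det_smul_one_add_smul_ones]
  congr! 2
  ext i j
  rcases eq_or_ne i j with rfl | h
  · simp
  · simp [one_apply, h]

theorem sign_detIW_ctlnW_of_indep (hδ : 0 < δ) (hσ : σ.Nonempty)
    (hindep : ∀ i ∈ σ, ∀ j ∈ σ, ¬ G i j) :
    Real.sign (detIW (ctlnW G ε δ) σ) = (-1) ^ (σ.card - 1) := by
  have hcard : (1 : ℝ) ≤ σ.card := by exact_mod_cast hσ.card_pos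
  have hpos : 0 < δ ^ (σ.card - 1) * (-δ + (1 + δ) * σ.card) :=
    mul_pos (pow_pos hδ _) (by nlinarith)
  rw [detIW_ctlnW_of_indep hσ hindep, neg_pow, mul_assoc]
  rcases neg_one_pow_eq_or ℝ (σ.card - 1) with h | h <;> rw [h]
  · rw [one_mul, Real.sign_of_pos hpos]
  · rw [neg_one_mul, Real.sign_of_neg (neg_neg_of_pos hpos)]

theorem re_neg_of_isRoot_charpoly_iff_card_eq_one (hδ : 0 < δ) (hσ : σ.Nonempty)
    (hindep : ∀ i ∈ σ, ∀ j ∈ σ, ¬ G i j) :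
    (∀ μ : ℂ, ((-(1 : Matrix σ σ ℝ) + (ctlnW G ε δ).submatrix Subtype.val Subtype.val).map
        Complex.ofReal).charpoly.IsRoot μ → μ.re < 0) ↔ σ.card = 1 := by
  simp only [isRoot_charpoly_ctlnW_of_indep hσ hindep]
  constructor
  · intro hstable
    by_contra hne
    have hδroot := hstable δ (by
      rw [sub_self, zero_pow (by have := hσ.card_pos; omega), zero_mul])
    rw [Complex.ofReal_re] at hδroot
    linarith
  · intro hcard μ hμ
    rw [hcard] at hμ
    have : μ = -1 := by linear_combination hμ
    simp [this]

end CTLN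

section FixedPoints

variable {n : ℕ} {W : Matrix (Fin n) (Fin n) ℝ} {b : Fin n → ℝ} {σ : Finset (Fin n)}

theorem sum_univ_mul_eq_of_support_subset {x : Fin n → ℝ} (hx : ∀ j ∉ σ, x j = 0) (i : Fin n) :
    ∑ j, W i j * x j = ∑ j ∈ σ, W i j * x j :=
  (sum_subset (subset_univ σ) fun j _ hj => by rw [hx j hj, mul_zero]).symm

/-- The "on-neuron" and "off-neuron" conditions characterizing fixed point supports. -/
theorem memFP_univ_iff :
    memFP W b univ σ ↔ ∃ x : Fin n → ℝ, (∀ i ∈ σ, 0 < x i) ∧ (∀ i ∉ σ, x i = 0) ∧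
      (∀ i ∈ σ, x i = ∑ j ∈ σ, W i j * x j + b i) ∧ ∀ i ∉ σ, ∑ j ∈ σ, W i j * x j + b i ≤ 0 := by
  constructor
  · rintro ⟨x, ⟨hfp, -⟩, hsupp⟩
    have hpos : ∀ i ∈ σ, 0 < x i := fun i hi => (hsupp i).mpr hi
    have hzero : ∀ i ∉ σ, x i = 0 := fun i hi =>
      le_antisymm (not_lt.mp (mt (hsupp i).mp hi)) (hfp i (mem_univ i) ▸ le_max_left _ _)
    have hfpσ : ∀ i, x i = max 0 (∑ j ∈ σ, W i j * x j + b i) := fun i => by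
      rw [← sum_univ_mul_eq_of_support_subset hzero]; exact hfp i (mem_univ i)
    refine ⟨x, hpos, hzero, fun i hi => ?_, fun i hi => ?_⟩
    · rcases max_choice 0 (∑ j ∈ σ, W i j * x j + b i) with h | h
      · exact absurd ((hfpσ i).trans h) (hpos i hi).ne'
      · exact (hfpσ i).trans h
    · exact max_eq_left_iff.mp (hzero i hi ▸ hfpσ i).symm
  · rintro ⟨x, hpos, hzero, hon, hoff⟩
    refine ⟨x, ⟨fun i _ => ?_, fun i hi => absurd (mem_univ i) hi⟩, fun i => ?_⟩
    · rw [sum_univ_mul_eq_of_support_subset hzero]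
      by_cases hi : i ∈ σ
      · rw [← hon i hi, max_eq_right (hpos i hi).le]
      · rw [hzero i hi, max_eq_left (hoff i hi)]
    · by_cases hi : i ∈ σ
      · simp [hi, hpos i hi]
      · simp [hi, hzero i hi]

end FixedPoints

section CTLNFixedPoints

variable {n : ℕ} {G : Fin n → Fin n → Prop} [DecidableRel G] {ε δ θ : ℝ} {σ : Finset (Fin n)}

theorem sum_ctlnW_mul_of_indep (hindep : ∀ i ∈ σ, ∀ j ∈ σ, ¬ G i j) {i : Fin n} (hi : i ∈ σ)
    (x : Fin n → ℝ) :
    ∑ j ∈ σ, ctlnW G ε δ i j * x j = (1 + δ) * x i - (1 + δ) * ∑ j ∈ σ, x j := by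
  calc ∑ j ∈ σ, ctlnW G ε δ i j * x j
      = ∑ j ∈ σ, ((1 + δ) * (if i = j then x j else 0) - (1 + δ) * x j) :=
        sum_congr rfl fun j hj => by rw [ctlnW_apply_of_indep hindep hi hj]; split_ifs <;> ring
    _ = (1 + δ) * x i - (1 + δ) * ∑ j ∈ σ, x j := by
        rw [sum_sub_distrib, ← mul_sum, ← mul_sum, sum_ite_eq, if_pos hi]

theorem not_edge_of_memFP (hε : 0 < ε) (hδ : 0 < δ) (hindep : ∀ i ∈ σ, ∀ j ∈ σ, ¬ G i j)
    (hfp : memFP (ctlnW G ε δ) (fun _ => θ) univ σ) {i k : Fin n} (hi : i ∈ σ) : ¬ G i k := by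
  intro hik
  by_cases hk : k ∈ σ
  · exact hindep i hi k hk hik
  obtain ⟨x, hpos, -, hon, hoff⟩ := memFP_univ_iff.mp hfp
  have hon_i := hon i hi
  rw [sum_ctlnW_mul_of_indep hindep hi] at hon_i
  -- Every input to `k` is at least `-1 - δ`, and the input from `i` exceeds that by `δ + ε`.
  have hinput : (δ + ε) * x i ≤ ∑ j ∈ σ, (ctlnW G ε δ k j + (1 + δ)) * x j := by
    have hk_i : ctlnW G ε δ k i + (1 + δ) = δ + ε := by
      rw [ctlnW_apply_of_edge (ne_of_mem_of_not_mem hi hk).symm hik]; ring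
    have hterm : ∀ j ∈ σ, 0 ≤ (ctlnW G ε δ k j + (1 + δ)) * x j := fun j hj =>
      mul_nonneg (by linarith [neg_one_sub_le_ctlnW (G := G) hε.le hδ.le k j]) (hpos j hj).le
    rw [← hk_i]
    exact single_le_sum hterm hi
  simp only [add_mul, sum_add_distrib, ← mul_sum] at hinput
  linarith [hoff k hk, mul_pos hε (hpos i hi)]

theorem memFP_of_forall_not_edge (hθ : 0 < θ) (hδ : 0 < δ) (hσ : σ.Nonempty)
    (hindep : ∀ i ∈ σ, ∀ j ∈ σ, ¬ G i j) (hsink : ∀ i ∈ σ, ∀ k, ¬ G i k) :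
    memFP (ctlnW G ε δ) (fun _ => θ) univ σ := by
  have hcard : (1 : ℝ) ≤ σ.card := by exact_mod_cast hσ.card_pos
  have hD : 0 < (1 + δ) * σ.card - δ := by nlinarith
  -- The uniform activity `v` solves the on-neuron equation `v = (1 + δ) v - (1 + δ) |σ| v + θ`.
  obtain ⟨v, hv, hvpos⟩ : ∃ v, θ = ((1 + δ) * σ.card - δ) * v ∧ 0 < v :=
    ⟨θ / ((1 + δ) * σ.card - δ), (mul_div_cancel₀ _ hD.ne').symm, div_pos hθ hD⟩
  set x : Fin n → ℝ := fun i => if i ∈ σ then v else 0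
  have hsum : ∀ i, ∑ j ∈ σ, ctlnW G ε δ i j * x j = (∑ j ∈ σ, ctlnW G ε δ i j) * v := by
    intro i
    rw [sum_mul]
    exact sum_congr rfl fun j hj => by simp [x, hj]
  refine memFP_univ_iff.mpr ⟨x, fun i hi => by simp [x, hi, hvpos], fun i hi => by simp [x, hi],
    fun i hi => ?_, fun i hi => ?_⟩
  · rw [sum_ctlnW_mul_of_indep hindep hi, sum_congr rfl fun j hj => if_pos hj]
    simp only [x, hi, if_true, sum_const, nsmul_eq_mul]
    linear_combination -hv
  · rw [hsum, sum_congr rfl fun j hj =>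
      ctlnW_apply_of_not_edge (ne_of_mem_of_not_mem hj hi).symm (hsink j hj i)]
    simp only [sum_const, nsmul_eq_mul]
    linarith [mul_pos hδ hvpos]

end CTLNFixedPoints

theorem independent_sets_rule_general {n : ℕ} (G : Fin n → Fin n → Prop) [DecidableRel G]
    (ε δ θ : ℝ)
    (hθ : 0 < θ) (hδ : 0 < δ) (hε : 0 < ε)
    (W : Matrix (Fin n) (Fin n) ℝ) (hWdef : W = ctlnW G ε δ)
    (b : Fin n → ℝ) (hbdef : b = fun _ => θ)
    (σ : Finset (Fin n)) (hσ : σ.Nonempty)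
    (hindep : ∀ i ∈ σ, ∀ j ∈ σ, ¬ G i j) :
    (memFP W b Finset.univ σ ↔ ∀ i ∈ σ, ∀ k : Fin n, ¬ G i k) ∧
    (memFP W b Finset.univ σ →
      ((∀ μ : ℂ, (Matrix.charpoly
          (((-(1 : Matrix {x // x ∈ σ} {x // x ∈ σ} ℝ)
              + W.submatrix Subtype.val Subtype.val)).map Complex.ofReal)).IsRoot μ →
          μ.re < 0) ↔ σ.card = 1) ∧
      Real.sign (detIW W σ) = (-1 : ℝ) ^ (σ.card - 1)) := by
  subst hWdef hbdef
  exact ⟨⟨fun hfp i hi _ => not_edge_of_memFP hε hδ hindep hfp hi,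
      memFP_of_forall_not_edge hθ hδ hσ hindep⟩,
    fun _ => ⟨re_neg_of_isRoot_charpoly_iff_card_eq_one hδ hσ hindep,
      sign_detIW_ctlnW_of_indep hδ hσ hindep⟩⟩

/-- **Independent sets rule.** Let `G` be a simple directed graph on `[n]` with CTLN
parameters in the legal range, and let `σ` be a nonempty independent set. Then
`σ ∈ FP(G)` iff every `i ∈ σ` is a sink of `G`. Furthermore, when `σ ∈ FP(G)`, the fixed
point is stable (every eigenvalue of `−I + W_σ` has negative real part) iff `|σ| = 1`,
and `sgn det(I − W_σ) = (−1)^{|σ|−1}`. -/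
theorem independent_sets_rule {n : ℕ} (G : Fin n → Fin n → Prop) [DecidableRel G]
    (hGirr : ∀ i, ¬ G i i) (ε δ θ : ℝ)
    (hθ : 0 < θ) (hδ : 0 < δ) (hε : 0 < ε) (hεδ : ε < δ / (δ + 1))
    (W : Matrix (Fin n) (Fin n) ℝ) (hWdef : W = ctlnW G ε δ)
    (b : Fin n → ℝ) (hbdef : b = fun _ => θ)
    (σ : Finset (Fin n)) (hσ : σ.Nonempty)
    (hindep : ∀ i ∈ σ, ∀ j ∈ σ, ¬ G i j) :
    (memFP W b Finset.univ σ ↔ ∀ i ∈ σ, ∀ k : Fin n, ¬ G i k) ∧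
    (memFP W b Finset.univ σ →
      ((∀ μ : ℂ, (Matrix.charpoly
          (((-(1 : Matrix {x // x ∈ σ} {x // x ∈ σ} ℝ)
              + W.submatrix Subtype.val Subtype.val)).map Complex.ofReal)).IsRoot μ →
          μ.re < 0) ↔ σ.card = 1) ∧
      Real.sign (detIW W σ) = (-1 : ℝ) ^ (σ.card - 1)) :=
  independent_sets_rule_general G ε δ θ hθ hδ hε W hWdef b hbdef σ hσ hindep
end
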